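/- arXiv:2410.14557 — 2 statements merged into one kernel-verified Lean document; each statement's English description precedes it below -/
import Mathlib

section
/- Let U > 0 and let g : [−U/2, U/2] → ℝ be concave with g ∈ W^{2,1}([−U/2, U/2]), g(−U/2) = g(U/2) = 0, and g' ∈ L²([−U/2, U/2]). Let s : ℝ → [−U/2, U/2] be measurable and non-increasing with ∫_ℝ z (s(z) − s₀(z)) dz < ∞, where s₀(z) = U/2 for z ≤ 0 and s₀(z) = −U/2 for z > 0. Then ∫_ℝ g(s(z)) dz ≤ C_# (∫_ℝ z (s(z) − s₀(z)) dz)^{1/2}, where C_# = (2 ∫_{−U/2}^{U/2} (g'(s))² ds)^{1/2}. -/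
/-
Write g (s z) = ∫_{s₀ z}^{s z} g' and exchange the order of integration. For a level σ, the
points z at which σ lies between s₀ z and s z form a set P_σ ⊆ [0, ∞) (where s lies above s₀)
and a set N_σ ⊆ (-∞, 0] (where it lies below), so ∫ g(s) = ∫ g'(σ) (|P_σ| - |N_σ|) dσ.
Cauchy–Schwarz in σ bounds this by ‖g'‖₂ ‖|P_σ| - |N_σ|‖₂, and (|P_σ| - |N_σ|)² ≤ |P_σ|² + |N_σ|².
A set S lying on one side of 0 obeys the bathtub inequality |S|² ≤ 2 ∫_S |z| dz, and integrating
∫_{P_σ} |z| + ∫_{N_σ} |z| over σ gives back ∫ |z| |s - s₀| dz = ∫ z (s - s₀) dz.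
-/

open MeasureTheory

noncomputable section

/-- the reference profile s₀ -/
def s0 (U z : ℝ) : ℝ := if z ≤ 0 then U / 2 else -U / 2

open Set
open scoped ENNReal

lemma integral_mul_le_sqrt_mul_sqrt {α : Type*} [MeasurableSpace α] {μ : Measure α}
    {f g : α → ℝ} (hf : MemLp f 2 μ) (hg : MemLp g 2 μ) :
    ∫ a, f a * g a ∂μ ≤ √(∫ a, f a ^ 2 ∂μ) * √(∫ a, g a ^ 2 ∂μ) := by
  have h := integral_mul_norm_le_Lp_mul_Lq Real.HolderConjugate.two_two
    (by rwa [ENNReal.ofReal_ofNat] : MemLp f (ENNReal.ofReal 2) μ)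
    (by rwa [ENNReal.ofReal_ofNat] : MemLp g (ENNReal.ofReal 2) μ)
  simp only [Real.norm_eq_abs, Real.rpow_two, sq_abs, ← Real.sqrt_eq_rpow] at h
  calc ∫ a, f a * g a ∂μ ≤ ∫ a, |f a * g a| ∂μ := (le_abs_self _).trans abs_integral_le_integral_abs
    _ ≤ _ := by simpa only [abs_mul] using h

lemma ENNReal.mul_le_sq_add_sq (a b : ℝ≥0∞) : a * b ≤ a ^ 2 + b ^ 2 := by
  rcases le_total a b with h | h
  · exact (mul_le_mul_left h b).trans ((sq b).ge.trans le_add_self)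
  · exact (mul_le_mul_right h a).trans ((sq a).ge.trans le_self_add)

lemma ENNReal.ofReal_sq_toReal_sub_toReal_le (x y : ℝ≥0∞) :
    ENNReal.ofReal ((x.toReal - y.toReal) ^ 2) ≤ x ^ 2 + y ^ 2 := by
  have hx := x.toReal_nonneg
  have hy := y.toReal_nonneg
  calc ENNReal.ofReal ((x.toReal - y.toReal) ^ 2)
      ≤ ENNReal.ofReal (x.toReal ^ 2 + y.toReal ^ 2) := by gcongr; nlinarith
    _ = ENNReal.ofReal x.toReal ^ 2 + ENNReal.ofReal y.toReal ^ 2 := by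
        rw [ENNReal.ofReal_add (by positivity) (by positivity), ENNReal.ofReal_pow hx,
          ENNReal.ofReal_pow hy]
    _ ≤ x ^ 2 + y ^ 2 := by gcongr <;> exact ENNReal.ofReal_toReal_le

lemma enorm_mul_ofReal_add_ofReal_neg (z x : ℝ) (hzx : 0 ≤ z * x) :
    ‖z‖ₑ * ENNReal.ofReal x + ‖z‖ₑ * ENNReal.ofReal (-x) = ENNReal.ofReal (z * x) := by
  rw [← mul_add, ← Real.enorm_of_nonneg hzx, enorm_mul]
  congr 1
  rcases le_total 0 x with hx | hx
  · simp [ENNReal.ofReal_of_nonpos (neg_nonpos.2 hx), Real.enorm_of_nonneg hx]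
  · simp [ENNReal.ofReal_of_nonpos hx, Real.enorm_eq_ofReal_abs, abs_of_nonpos hx]

lemma memLp_two_toReal_sub_toReal_and_integral_sq_le {α : Type*} [MeasurableSpace α]
    {μ : Measure α} {u v : α → ℝ≥0∞} (hu : Measurable u) (hv : Measurable v) {C : ℝ} (hC : 0 ≤ C)
    (h : ∫⁻ a, (u a ^ 2 + v a ^ 2) ∂μ ≤ ENNReal.ofReal C) :
    MemLp (fun a => (u a).toReal - (v a).toReal) 2 μ ∧
      ∫ a, ((u a).toReal - (v a).toReal) ^ 2 ∂μ ≤ C := by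
  have hmeas : AEStronglyMeasurable (fun a => (u a).toReal - (v a).toReal) μ :=
    (hu.ennreal_toReal.sub hv.ennreal_toReal).aestronglyMeasurable
  have hle : ∫⁻ a, ENNReal.ofReal (((u a).toReal - (v a).toReal) ^ 2) ∂μ ≤ ENNReal.ofReal C :=
    (lintegral_mono fun a => ENNReal.ofReal_sq_toReal_sub_toReal_le _ _).trans h
  have hint : Integrable (fun a => ((u a).toReal - (v a).toReal) ^ 2) μ := by
    refine ⟨hmeas.pow 2, ?_⟩
    simp_rw [HasFiniteIntegral, Real.enorm_of_nonneg (sq_nonneg _)]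
    exact hle.trans_lt ENNReal.ofReal_lt_top
  refine ⟨(memLp_two_iff_integrable_sq hmeas).2 hint, ?_⟩
  rw [integral_eq_lintegral_of_nonneg_ae (ae_of_all _ fun a => sq_nonneg _) hint.1]
  exact ENNReal.toReal_le_of_le_ofReal hC hle

lemma integral_indicator_const_sub_indicator_const {α : Type*} [MeasurableSpace α]
    {μ : Measure α} {S T : Set α} (hS : MeasurableSet S) (hT : MeasurableSet T) (hSμ : μ S ≠ ⊤)
    (hTμ : μ T ≠ ⊤) (c : ℝ) :
    ∫ a, (S.indicator (fun _ => c) a - T.indicator (fun _ => c) a) ∂μ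
      = c * (μ.real S - μ.real T) := by
  rw [integral_sub ((integrableOn_const hSμ).integrable_indicator hS)
    ((integrableOn_const hTμ).integrable_indicator hT), integral_indicator_const _ hS,
    integral_indicator_const _ hT, smul_eq_mul, smul_eq_mul]
  ring

lemma integral_indicator_Ioc_sub_indicator_Ioc (G : ℝ → ℝ) (a b : ℝ) :
    ∫ σ, ((Ioc a b).indicator G σ - (Ioc b a).indicator G σ) = ∫ σ in a..b, G σ := by
  rcases le_total a b with h | h
  · simp [Ioc_eq_empty (not_lt.2 h), integral_indicator measurableSet_Ioc,
      intervalIntegral.integral_of_le h]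
  · simp [Ioc_eq_empty (not_lt.2 h), integral_indicator measurableSet_Ioc,
      intervalIntegral.integral_of_ge h, integral_neg]

lemma sq_le_two_mul_lintegral_tsub_ofReal (m : ℝ≥0∞) :
    m ^ 2 ≤ 2 * ∫⁻ t in Ioi (0 : ℝ), (m - ENNReal.ofReal t) := by
  rcases eq_or_ne m ⊤ with rfl | hm
  · simp
  obtain ⟨A, hA, rfl⟩ : ∃ A : ℝ, 0 ≤ A ∧ m = ENNReal.ofReal A :=
    ⟨m.toReal, ENNReal.toReal_nonneg, (ENNReal.ofReal_toReal hm).symm⟩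
  have hint : ∫⁻ t in Ioc 0 A, ENNReal.ofReal (A - t) = ENNReal.ofReal (A ^ 2 / 2) := by
    rw [← ofReal_integral_eq_lintegral_ofReal, ← intervalIntegral.integral_of_le hA,
      intervalIntegral.integral_comp_sub_left (fun t => t), integral_id]
    · simp
    · exact (continuous_const.sub continuous_id).integrableOn_Ioc
    · filter_upwards [ae_restrict_mem measurableSet_Ioc] with t ht
      exact sub_nonneg.2 ht.2
  calc ENNReal.ofReal A ^ 2 = 2 * ENNReal.ofReal (A ^ 2 / 2) := by
        rw [← ENNReal.ofReal_pow hA, ← ENNReal.ofReal_ofNat, ← ENNReal.ofReal_mul zero_le_two]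
        ring_nf
    _ = 2 * ∫⁻ t in Ioc 0 A, (ENNReal.ofReal A - ENNReal.ofReal t) := by
        rw [← hint]
        congr 1
        refine setLIntegral_congr_fun measurableSet_Ioc fun t ht => ?_
        exact ENNReal.ofReal_sub A ht.1.le
    _ ≤ 2 * ∫⁻ t in Ioi 0, (ENNReal.ofReal A - ENNReal.ofReal t) := by
        gcongr
        exact Ioc_subset_Ioi_self

lemma volume_diff_setOf_lt_abs_le {S : Set ℝ} (h : S ⊆ Ici 0 ∨ S ⊆ Iic 0) (t : ℝ) :
    volume (S \ {z | t < |z|}) ≤ ENNReal.ofReal t := by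
  have habs {z} (hz : z ∈ S \ {z | t < |z|}) : |z| ≤ t := not_lt.1 hz.2
  rcases h with h | h
  · calc volume (S \ {z | t < |z|}) ≤ volume (Icc 0 t) :=
          measure_mono fun z hz => ⟨h hz.1, (le_abs_self z).trans (habs hz)⟩
      _ = ENNReal.ofReal t := by simp
  · calc volume (S \ {z | t < |z|}) ≤ volume (Icc (-t) 0) :=
          measure_mono fun z hz => ⟨neg_le.1 ((neg_le_abs z).trans (habs hz)), h hz.1⟩
      _ = ENNReal.ofReal t := by simp

lemma volume_sq_le_two_mul_setLIntegral_enorm {S : Set ℝ} (h : S ⊆ Ici 0 ∨ S ⊆ Iic 0) :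
    volume S ^ 2 ≤ 2 * ∫⁻ z in S, ‖z‖ₑ := by
  have hlayer : ∫⁻ z in S, ‖z‖ₑ = ∫⁻ t in Ioi 0, volume.restrict S {z | t < |z|} := by
    simp_rw [Real.enorm_eq_ofReal_abs]
    exact lintegral_eq_lintegral_meas_lt _ (ae_of_all _ fun z => abs_nonneg z)
      continuous_abs.measurable.aemeasurable
  have hslice (t : ℝ) : volume S - ENNReal.ofReal t ≤ volume.restrict S {z | t < |z|} := by
    rw [Measure.restrict_apply (measurableSet_lt measurable_const continuous_abs.measurable),
      inter_comm, tsub_le_iff_right]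
    exact (measure_le_inter_add_sdiff _ _ _).trans
      (by gcongr; exact volume_diff_setOf_lt_abs_le h t)
  calc volume S ^ 2 ≤ 2 * ∫⁻ t in Ioi 0, (volume S - ENNReal.ofReal t) :=
        sq_le_two_mul_lintegral_tsub_ofReal _
    _ ≤ 2 * ∫⁻ z in S, ‖z‖ₑ := by
        rw [hlayer]
        gcongr with t
        exact hslice t

-- `crossingSet s₀ s σ` and `crossingSet s s₀ σ` are the sets P_σ and N_σ of the proof idea.
def crossingSet (f₀ f : ℝ → ℝ) (σ : ℝ) : Set ℝ := {z | σ ∈ Ioc (f₀ z) (f z)}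

section crossingSet

variable {f₀ f : ℝ → ℝ}

lemma measurableSet_crossingSet_prod (hf₀ : Measurable f₀) (hf : Measurable f) :
    MeasurableSet {q : ℝ × ℝ | q.2 ∈ crossingSet f₀ f q.1} :=
  (measurableSet_lt (hf₀.comp measurable_snd) measurable_fst).inter
    (measurableSet_le measurable_fst (hf.comp measurable_snd))

lemma measurableSet_crossingSet (hf₀ : Measurable f₀) (hf : Measurable f) (σ : ℝ) :
    MeasurableSet (crossingSet f₀ f σ) :=
  measurable_prodMk_left (measurableSet_crossingSet_prod hf₀ hf)

lemma measurable_volume_crossingSet (hf₀ : Measurable f₀) (hf : Measurable f) :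
    Measurable fun σ => volume (crossingSet f₀ f σ) :=
  measurable_measure_prodMk_left (measurableSet_crossingSet_prod hf₀ hf)

lemma lintegral_setLIntegral_crossingSet (hf₀ : Measurable f₀) (hf : Measurable f)
    {w : ℝ → ℝ≥0∞} (hw : Measurable w) :
    ∫⁻ σ, ∫⁻ z in crossingSet f₀ f σ, w z = ∫⁻ z, w z * ENNReal.ofReal (f z - f₀ z) := by
  have hmeas := (hw.comp measurable_snd).indicator (measurableSet_crossingSet_prod hf₀ hf)
  calc ∫⁻ σ, ∫⁻ z in crossingSet f₀ f σ, w z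
      = ∫⁻ σ, ∫⁻ z, {q : ℝ × ℝ | q.2 ∈ crossingSet f₀ f q.1}.indicator (w ∘ Prod.snd) (σ, z) := by
        simp_rw [← lintegral_indicator (measurableSet_crossingSet hf₀ hf _)]
        rfl
    _ = ∫⁻ z, ∫⁻ σ, (Ioc (f₀ z) (f z)).indicator (fun _ => w z) σ :=
        lintegral_lintegral_swap hmeas.aemeasurable
    _ = ∫⁻ z, w z * ENNReal.ofReal (f z - f₀ z) := by
        simp_rw [lintegral_indicator_const measurableSet_Ioc, Real.volume_Ioc]

lemma crossingSet_subset_Ici (hsign : ∀ z, 0 ≤ z * (f z - f₀ z)) (σ : ℝ) :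
    crossingSet f₀ f σ ⊆ Ici 0 := fun z hz =>
  mem_Ici.2 <| le_of_not_gt fun hz₀ => by nlinarith [hsign z, hz.1, hz.2]

lemma crossingSet_subset_Iic (hsign : ∀ z, 0 ≤ z * (f z - f₀ z)) (σ : ℝ) :
    crossingSet f f₀ σ ⊆ Iic 0 := fun z hz =>
  mem_Iic.2 <| le_of_not_gt fun hz₀ => by nlinarith [hsign z, hz.1, hz.2]

lemma lintegral_volume_crossingSet_sq_le (hf₀ : Measurable f₀) (hf : Measurable f)
    (h : ∀ σ, crossingSet f₀ f σ ⊆ Ici 0 ∨ crossingSet f₀ f σ ⊆ Iic 0) :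
    ∫⁻ σ, volume (crossingSet f₀ f σ) ^ 2 ≤ 2 * ∫⁻ z, ‖z‖ₑ * ENNReal.ofReal (f z - f₀ z) := by
  calc ∫⁻ σ, volume (crossingSet f₀ f σ) ^ 2
      ≤ ∫⁻ σ, 2 * ∫⁻ z in crossingSet f₀ f σ, ‖z‖ₑ :=
        lintegral_mono fun σ => volume_sq_le_two_mul_setLIntegral_enorm (h σ)
    _ = 2 * ∫⁻ z, ‖z‖ₑ * ENNReal.ofReal (f z - f₀ z) := by
        rw [lintegral_const_mul' _ _ ENNReal.ofNat_ne_top,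
          lintegral_setLIntegral_crossingSet hf₀ hf measurable_enorm]

lemma lintegral_volume_crossingSet_sq_add_sq_le (hf₀ : Measurable f₀) (hf : Measurable f)
    (hsign : ∀ z, 0 ≤ z * (f z - f₀ z)) :
    ∫⁻ σ, (volume (crossingSet f₀ f σ) ^ 2 + volume (crossingSet f f₀ σ) ^ 2)
      ≤ 2 * ∫⁻ z, ENNReal.ofReal (z * (f z - f₀ z)) := by
  have hpos := lintegral_volume_crossingSet_sq_le hf₀ hf
    fun σ => Or.inl (crossingSet_subset_Ici hsign σ)
  have hneg := lintegral_volume_crossingSet_sq_le hf hf₀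
    fun σ => Or.inr (crossingSet_subset_Iic hsign σ)
  calc _ = (∫⁻ σ, volume (crossingSet f₀ f σ) ^ 2) + ∫⁻ σ, volume (crossingSet f f₀ σ) ^ 2 :=
        lintegral_add_left ((measurable_volume_crossingSet hf₀ hf).pow_const 2) _
    _ ≤ 2 * (∫⁻ z, ‖z‖ₑ * ENNReal.ofReal (f z - f₀ z))
          + 2 * ∫⁻ z, ‖z‖ₑ * ENNReal.ofReal (f₀ z - f z) := add_le_add hpos hneg
    _ = 2 * ∫⁻ z, ENNReal.ofReal (z * (f z - f₀ z)) := by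
        rw [← mul_add, ← lintegral_add_left (by fun_prop)]
        simp_rw [← enorm_mul_ofReal_add_ofReal_neg _ _ (hsign _), neg_sub]

lemma integrable_indicator_crossingSet {G : ℝ → ℝ} (hG : MemLp G 2) (hf₀ : Measurable f₀)
    (hf : Measurable f) (hfin : ∫⁻ σ, volume (crossingSet f₀ f σ) ^ 2 ≠ ⊤) :
    Integrable (fun q : ℝ × ℝ => (crossingSet f₀ f q.1).indicator (fun _ => G q.1) q.2)
      (volume.prod volume) := by
  have hmeas : AEStronglyMeasurable
      (fun q : ℝ × ℝ => (crossingSet f₀ f q.1).indicator (fun _ => G q.1) q.2)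
      (volume.prod volume) :=
    (hG.1.comp_fst (ν := volume)).indicator (measurableSet_crossingSet_prod hf₀ hf)
  have hG2 : ∫⁻ σ, ‖G σ‖ₑ ^ 2 < ⊤ := by
    simpa [HasFiniteIntegral, enorm_pow] using hG.integrable_sq.2
  refine ⟨hmeas, ?_⟩
  rw [HasFiniteIntegral, lintegral_prod _ hmeas.enorm]
  simp_rw [enorm_indicator_eq_indicator_enorm,
    lintegral_indicator_const (measurableSet_crossingSet hf₀ hf _)]
  calc ∫⁻ σ, ‖G σ‖ₑ * volume (crossingSet f₀ f σ)
      ≤ ∫⁻ σ, (‖G σ‖ₑ ^ 2 + volume (crossingSet f₀ f σ) ^ 2) :=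
        lintegral_mono fun σ => ENNReal.mul_le_sq_add_sq _ _
    _ = (∫⁻ σ, ‖G σ‖ₑ ^ 2) + ∫⁻ σ, volume (crossingSet f₀ f σ) ^ 2 :=
        lintegral_add_right _ ((measurable_volume_crossingSet hf₀ hf).pow_const 2)
    _ < ⊤ := ENNReal.add_lt_top.2 ⟨hG2, hfin.lt_top⟩

theorem integral_intervalIntegral_le_sqrt_mul_sqrt {G : ℝ → ℝ} (hG : MemLp G 2)
    (hf₀ : Measurable f₀) (hf : Measurable f) (hsign : ∀ z, 0 ≤ z * (f z - f₀ z))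
    (hmom : Integrable fun z => z * (f z - f₀ z)) :
    ∫ z, ∫ σ in f₀ z..f z, G σ ≤ √(2 * ∫ σ, G σ ^ 2) * √(∫ z, z * (f z - f₀ z)) := by
  set M := ∫ z, z * (f z - f₀ z)
  set K : ℝ → ℝ → ℝ := fun σ z => (crossingSet f₀ f σ).indicator (fun _ => G σ) z
    - (crossingSet f f₀ σ).indicator (fun _ => G σ) z
  have hP := measurable_volume_crossingSet hf₀ hf
  have hN := measurable_volume_crossingSet hf hf₀
  have hvol : ∫⁻ σ, (volume (crossingSet f₀ f σ) ^ 2 + volume (crossingSet f f₀ σ) ^ 2)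
      ≤ ENNReal.ofReal (2 * M) := by
    rw [ENNReal.ofReal_mul zero_le_two, ENNReal.ofReal_ofNat,
      ofReal_integral_eq_lintegral_ofReal hmom (ae_of_all _ hsign)]
    exact lintegral_volume_crossingSet_sq_add_sq_le hf₀ hf hsign
  have hfin := (hvol.trans_lt ENNReal.ofReal_lt_top).ne
  obtain ⟨hd, hd2⟩ := memLp_two_toReal_sub_toReal_and_integral_sq_le hP hN
    (mul_nonneg zero_le_two (integral_nonneg hsign)) hvol
  have hK : Integrable (Function.uncurry K) (volume.prod volume) :=
    (integrable_indicator_crossingSet hG hf₀ hf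
      (ne_top_of_le_ne_top hfin (lintegral_mono fun _ => le_self_add))).sub
    (integrable_indicator_crossingSet hG hf hf₀
      (ne_top_of_le_ne_top hfin (lintegral_mono fun _ => le_add_self)))
  have hslice : ∀ᵐ σ, ∫ z, K σ z
      = G σ * (volume.real (crossingSet f₀ f σ) - volume.real (crossingSet f f₀ σ)) := by
    filter_upwards [ae_lt_top ((hP.pow_const 2).add (hN.pow_const 2)) hfin] with σ hσ
    obtain ⟨hPσ, hNσ⟩ := ENNReal.add_lt_top.1 hσ
    exact integral_indicator_const_sub_indicator_const (measurableSet_crossingSet hf₀ hf σ)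
      (measurableSet_crossingSet hf hf₀ σ) (by simpa using hPσ.ne) (by simpa using hNσ.ne) _
  calc ∫ z, ∫ σ in f₀ z..f z, G σ = ∫ z, ∫ σ, K σ z := by
        simp_rw [← integral_indicator_Ioc_sub_indicator_Ioc]
        rfl
    _ = ∫ σ, ∫ z, K σ z := (integral_integral_swap hK).symm
    _ = ∫ σ, G σ * (volume.real (crossingSet f₀ f σ) - volume.real (crossingSet f f₀ σ)) :=
        integral_congr_ae hslice
    _ ≤ √(∫ σ, G σ ^ 2) * √(2 * M) :=
        (integral_mul_le_sqrt_mul_sqrt hG hd).trans (by gcongr)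
    _ = √(2 * ∫ σ, G σ ^ 2) * √M := by
        rw [Real.sqrt_mul zero_le_two, Real.sqrt_mul zero_le_two]
        ring

end crossingSet

lemma integral_indicator_Icc_sq {a b : ℝ} (hab : a ≤ b) (φ : ℝ → ℝ) :
    ∫ t, (Icc a b).indicator φ t ^ 2 = ∫ t in a..b, φ t ^ 2 := by
  simp_rw [sq, ← indicator_mul, integral_indicator measurableSet_Icc, integral_Icc_eq_integral_Ioc,
    intervalIntegral.integral_of_le hab]

lemma intervalIntegral_indicator_eq_sub_of_hasDerivWithinAt {g g' : ℝ → ℝ} {a b : ℝ}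
    (hg : ∀ x ∈ Icc a b, HasDerivWithinAt g (g' x) (Icc a b) x) (hg' : ContinuousOn g' (Icc a b))
    {x y : ℝ} (hx : x ∈ Icc a b) (hy : y ∈ Icc a b) :
    ∫ t in x..y, (Icc a b).indicator g' t = g y - g x := by
  have hsub : uIcc x y ⊆ Icc a b := uIcc_subset_Icc hx hy
  rw [intervalIntegral.integral_congr fun t ht => indicator_of_mem (hsub ht) g']
  refine intervalIntegral.integral_eq_sub_of_hasDeriv_right
    (fun t ht => (hg t (hsub ht)).continuousWithinAt.mono hsub) (fun t ht => ?_)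
    (hg'.mono hsub).intervalIntegrable
  have ht' : t ∈ Ioo a b :=
    ⟨(le_min hx.1 hy.1).trans_lt ht.1, ht.2.trans_le (max_le hx.2 hy.2)⟩
  exact ((hg t (Ioo_subset_Icc_self ht')).hasDerivAt (Icc_mem_nhds ht'.1 ht'.2)).hasDerivWithinAt

lemma apply_s0_eq_zero {U : ℝ} {g : ℝ → ℝ} (hl : g (-(U / 2)) = 0) (hr : g (U / 2) = 0) (z : ℝ) :
    g (s0 U z) = 0 := by
  unfold s0
  split_ifs
  · exact hr
  · rwa [neg_div]

lemma measurable_s0 (U : ℝ) : Measurable (s0 U) :=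
  Measurable.ite measurableSet_Iic measurable_const measurable_const

lemma s0_mem_Icc {U : ℝ} (hU : -(U / 2) ≤ U / 2) (z : ℝ) : s0 U z ∈ Icc (-(U / 2)) (U / 2) := by
  unfold s0
  split_ifs
  · exact right_mem_Icc.2 hU
  · rw [neg_div]
    exact left_mem_Icc.2 hU

lemma mul_sub_s0_nonneg {U x : ℝ} (hx : x ∈ Icc (-(U / 2)) (U / 2)) (z : ℝ) :
    0 ≤ z * (x - s0 U z) := by
  unfold s0
  split_ifs with hz <;> nlinarith [hx.1, hx.2]

theorem interpolation_inequality_general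
    (U : ℝ)
    (g g' g'' : ℝ → ℝ)
    -- g ∈ W^{2,1}([−U/2, U/2]): g' is the derivative of g, g'' the (weak)
    -- derivative of g', and g'' is integrable on the interval
    (hg' : ∀ ξ ∈ Set.Icc (-(U/2)) (U/2),
      HasDerivWithinAt g (g' ξ) (Set.Icc (-(U/2)) (U/2)) ξ)
    (hg'' : ∀ ξ ∈ Set.Icc (-(U/2)) (U/2),
      HasDerivWithinAt g' (g'' ξ) (Set.Icc (-(U/2)) (U/2)) ξ)
    -- g vanishes at the endpoints
    (hg_left : g (-(U/2)) = 0) (hg_right : g (U/2) = 0)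
    -- g' ∈ L²([−U/2, U/2])
    (hg'L2 : MeasureTheory.IntegrableOn (fun ξ => (g' ξ) ^ 2) (Set.Icc (-(U/2)) (U/2)))
    -- s : ℝ → [−U/2, U/2] is measurable and non-increasing
    (s : ℝ → ℝ) (hs_meas : Measurable s)
    (hs_range : ∀ z : ℝ, s z ∈ Set.Icc (-(U/2)) (U/2))
    -- finite moment ∫ z (s − s₀) dz < ∞ (the integrand is nonnegative)
    (hmom : MeasureTheory.Integrable (fun z => z * (s z - s0 U z))) :
    ∫ z : ℝ, g (s z) ≤
      Real.sqrt (2 * ∫ ξ in (-(U/2))..(U/2), (g' ξ) ^ 2) *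
        Real.sqrt (∫ z : ℝ, z * (s z - s0 U z)) := by
  set I := Icc (-(U / 2)) (U / 2)
  have hI : -(U / 2) ≤ U / 2 := (hs_range 0).1.trans (hs_range 0).2
  have hg'cont : ContinuousOn g' I := fun ξ hξ => (hg'' ξ hξ).continuousWithinAt
  have hG : MemLp (I.indicator g') 2 :=
    (memLp_indicator_iff_restrict measurableSet_Icc).2
      ((memLp_two_iff_integrable_sq (hg'cont.aestronglyMeasurable measurableSet_Icc)).2 hg'L2)
  have hrepr (z : ℝ) : g (s z) = ∫ σ in s0 U z..s z, I.indicator g' σ := by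
    rw [intervalIntegral_indicator_eq_sub_of_hasDerivWithinAt hg' hg'cont (s0_mem_Icc hI z)
      (hs_range z), apply_s0_eq_zero hg_left hg_right, sub_zero]
  calc ∫ z, g (s z) = ∫ z, ∫ σ in s0 U z..s z, I.indicator g' σ := by simp_rw [← hrepr]
    _ ≤ _ := integral_intervalIntegral_le_sqrt_mul_sqrt hG (measurable_s0 U) hs_meas
          (fun z => mul_sub_s0_nonneg (hs_range z) z) hmom
    _ = _ := by rw [integral_indicator_Icc_sq hI]

theorem interpolation_inequality
    (U : ℝ) (hU : 0 < U)
    (g g' g'' : ℝ → ℝ)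
    -- g is concave on [−U/2, U/2]
    (hconc : ConcaveOn ℝ (Set.Icc (-(U/2)) (U/2)) g)
    -- g ∈ W^{2,1}([−U/2, U/2]): g' is the derivative of g, g'' the (weak)
    -- derivative of g', and g'' is integrable on the interval
    (hg' : ∀ ξ ∈ Set.Icc (-(U/2)) (U/2),
      HasDerivWithinAt g (g' ξ) (Set.Icc (-(U/2)) (U/2)) ξ)
    (hg'' : ∀ ξ ∈ Set.Icc (-(U/2)) (U/2),
      HasDerivWithinAt g' (g'' ξ) (Set.Icc (-(U/2)) (U/2)) ξ)
    (hg''int : MeasureTheory.IntegrableOn g'' (Set.Icc (-(U/2)) (U/2)))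
    -- g vanishes at the endpoints
    (hg_left : g (-(U/2)) = 0) (hg_right : g (U/2) = 0)
    -- g' ∈ L²([−U/2, U/2])
    (hg'L2 : MeasureTheory.IntegrableOn (fun ξ => (g' ξ) ^ 2) (Set.Icc (-(U/2)) (U/2)))
    -- s : ℝ → [−U/2, U/2] is measurable and non-increasing
    (s : ℝ → ℝ) (hs_meas : Measurable s) (hs_anti : Antitone s)
    (hs_range : ∀ z : ℝ, s z ∈ Set.Icc (-(U/2)) (U/2))
    -- finite moment ∫ z (s − s₀) dz < ∞ (the integrand is nonnegative)
    (hmom : MeasureTheory.Integrable (fun z => z * (s z - s0 U z))) :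
    ∫ z : ℝ, g (s z) ≤
      Real.sqrt (2 * ∫ ξ in (-(U/2))..(U/2), (g' ξ) ^ 2) *
        Real.sqrt (∫ z : ℝ, z * (s z - s0 U z)) :=
  interpolation_inequality_general U g g' g'' hg' hg'' hg_left hg_right hg'L2 s hs_meas hs_range
    hmom

end
end

section
/- Let U > 0 and let l : (0,∞) → (0,∞) be differentiable and satisfy the differential inequality l(t) l'(t) ≤ 1 + U l(t)/√12 for all t > 0. Then limsup_{t → ∞} l(t)/(U t) ≤ 1/(2√3). -/
/-! Where `l ≥ L`, the inequality gives `l' ≤ 1/L + U/√12`, so `l` can never cross upwards a line of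
slope `s > 1/L + U/√12` that starts above both `L` and `l(1)`. Letting `L → ∞` shows that `l(t)/t` is
eventually below any `s > U/√12`, and `U/√12 / U = 1/(2√3)`. -/

open Filter

lemma Real.sqrt_twelve : Real.sqrt 12 = 2 * Real.sqrt 3 := by
  rw [show (12 : ℝ) = 2 ^ 2 * 3 by norm_num, Real.sqrt_mul (by positivity), Real.sqrt_sq zero_le_two]

theorem le_max_add_mul_of_deriv_lt_of_le {f : ℝ → ℝ} {a L s : ℝ} (hs : 0 ≤ s)
    (hf : ∀ x, a ≤ x → DifferentiableAt ℝ f x) (hderiv : ∀ x, a ≤ x → L ≤ f x → deriv f x < s)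
    {b : ℝ} (hab : a ≤ b) : f b ≤ max (f a) L + s * (b - a) := by
  have hline : ∀ x, HasDerivAt (fun t => max (f a) L + s * (t - a)) s x := fun x => by
    simpa using ((hasDerivAt_id x).sub_const a).const_mul s |>.const_add (max (f a) L)
  refine image_le_of_deriv_right_lt_deriv_boundary
    (fun x hx => (hf x hx.1).continuousAt.continuousWithinAt)
    (fun x hx => (hf x hx.1).hasDerivAt.hasDerivWithinAt) (by simp) hline
    (fun x hx hfx => hderiv x hx.1 ?_) ⟨hab, le_rfl⟩
  rw [hfx]
  nlinarith [le_max_right (f a) L, hx.1]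

section MulDerivLe

variable {l : ℝ → ℝ} {c : ℝ}

theorem exists_eventually_le_add_mul_of_mul_deriv_le (hl_pos : ∀ t, 0 < t → 0 < l t)
    (hl_diff : ∀ t, 0 < t → DifferentiableAt ℝ l t)
    (hineq : ∀ t, 0 < t → l t * deriv l t ≤ 1 + c * l t) {s : ℝ} (hcs : c < s) (hs : 0 ≤ s) :
    ∃ C, ∀ᶠ t in atTop, l t ≤ C + s * t := by
  set L := 2 / (s - c)
  have hL : 0 < L := div_pos two_pos (sub_pos.2 hcs)
  have hderiv : ∀ t, 1 ≤ t → L ≤ l t → deriv l t < s := fun t ht hLt => by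
    have hlt := hl_pos t (one_pos.trans_le ht)
    calc deriv l t ≤ 1 / l t + c := by
          rw [div_add' _ _ _ hlt.ne', le_div_iff₀ hlt]
          linarith [hineq t (one_pos.trans_le ht)]
      _ ≤ 1 / L + c := by gcongr
      _ = (s - c) / 2 + c := by rw [one_div_div]
      _ < s := by linarith
  refine ⟨max (l 1) L, (eventually_ge_atTop 1).mono fun t ht => ?_⟩
  have := le_max_add_mul_of_deriv_lt_of_le hs (fun x hx => hl_diff x (one_pos.trans_le hx))
    hderiv ht
  nlinarith

theorem eventually_div_le_of_mul_deriv_le (hl_pos : ∀ t, 0 < t → 0 < l t)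
    (hl_diff : ∀ t, 0 < t → DifferentiableAt ℝ l t)
    (hineq : ∀ t, 0 < t → l t * deriv l t ≤ 1 + c * l t) {s : ℝ} (hcs : c < s) (hs : 0 < s) :
    ∀ᶠ t in atTop, l t / t ≤ s := by
  obtain ⟨s₀, hs₀, hs₀s⟩ := exists_between (max_lt hcs hs)
  obtain ⟨C, hC⟩ := exists_eventually_le_add_mul_of_mul_deriv_le hl_pos hl_diff hineq
    ((le_max_left c 0).trans_lt hs₀) ((le_max_right c 0).trans hs₀.le)
  filter_upwards [hC, eventually_gt_atTop 0, eventually_ge_atTop (C / (s - s₀))]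
    with t hle ht hCt
  rw [div_le_iff₀ (sub_pos.2 hs₀s)] at hCt
  rw [div_le_iff₀ ht]
  linarith

end MulDerivLe

theorem ode_comparison_linear_growth
    (U : ℝ) (hU : 0 < U)
    (l : ℝ → ℝ)
    (hl_pos : ∀ t : ℝ, 0 < t → 0 < l t)
    (hl_diff : ∀ t : ℝ, 0 < t → DifferentiableAt ℝ l t)
    (hineq : ∀ t : ℝ, 0 < t → l t * deriv l t ≤ 1 + U * l t / Real.sqrt 12) :
    (∀ ε > (0:ℝ), ∀ᶠ t in atTop, l t / (U * t) ≤ 1 / (2 * Real.sqrt 3) + ε) ∧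
      Filter.limsup (fun t => l t / (U * t)) atTop ≤ 1 / (2 * Real.sqrt 3) := by
  have hineq' : ∀ t, 0 < t → l t * deriv l t ≤ 1 + U / Real.sqrt 12 * l t :=
    fun t ht => (hineq t ht).trans_eq (by ring)
  have hbound : ∀ ε > (0:ℝ), ∀ᶠ t in atTop, l t / (U * t) ≤ 1 / (2 * Real.sqrt 3) + ε := by
    intro ε hε
    filter_upwards [eventually_div_le_of_mul_deriv_le hl_pos hl_diff hineq'
      (s := U / Real.sqrt 12 + ε * U) (by nlinarith) (by positivity)] with t ht
    calc l t / (U * t) = l t / t / U := by rw [mul_comm, div_div]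
      _ ≤ (U / Real.sqrt 12 + ε * U) / U := by gcongr
      _ = 1 / (2 * Real.sqrt 3) + ε := by rw [Real.sqrt_twelve]; field_simp
  have hcobdd : IsCoboundedUnder (· ≤ ·) atTop (fun t => l t / (U * t)) :=
    isCoboundedUnder_le_of_eventually_le atTop (x := 0) <|
      (eventually_gt_atTop 0).mono fun t ht => (div_pos (hl_pos t ht) (by positivity)).le
  exact ⟨hbound, le_of_forall_pos_le_add fun ε hε => limsup_le_of_le hcobdd (hbound ε hε)⟩
end
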